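/- Let 0 ≤ ℓ ≤ n be integers and let u : ℝ^d → ℂ be a C^n function such that sup_x ⟨x⟩^s |u(x)| < ∞ and sup_{|α|=n} sup_x ⟨x⟩^r |∂^α u(x)| < ∞ for some s, r ≥ 0. Then for every multi-index α with |α| = ℓ, one has sup_x ⟨x⟩^ν |∂^α u(x)| < ∞ where ν = (1−ℓ/n)s + (ℓ/n)r. -/

import Mathlib

open MeasureTheory

noncomputable def jap {d : ℕ} (x : EuclideanSpace ℝ (Fin d)) : ℝ := Real.sqrt (1 + ‖x‖^2)

/-- First-order partial derivative in the `i`-th coordinate direction. -/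
noncomputable def pd {d : ℕ} (i : Fin d) (f : EuclideanSpace ℝ (Fin d) → ℂ) :
    EuclideanSpace ℝ (Fin d) → ℂ :=
  fun x => fderiv ℝ f x (EuclideanSpace.single i 1)

/-- The partial derivative `∂^α` associated with a multi-index `α`. -/
noncomputable def mderiv {d : ℕ} (α : Fin d → ℕ) (f : EuclideanSpace ℝ (Fin d) → ℂ) :
    EuclideanSpace ℝ (Fin d) → ℂ :=
  (List.finRange d).foldr (fun i g => (pd i)^[α i] g) f

/-!
Along a ray `t ↦ x + t • v` (`t ≥ 0`, `v = ±h eᵢ` pointing away from the origin) the weight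
`⟨·⟩` is at least `⟨x⟩`, so the Landau–Kolmogorov estimate on a half-line,
`|g⁽ᵏ⁾(0)| ≤ K (sup |g| + sup |g⁽ᵐ⁾|)`, turns bounds `⟨·⟩ᵃ |f| ≤ A` and `⟨·⟩ᵇ |∂ᵢᵐ f| ≤ B` into
`hᵏ |∂ᵢᵏ f(x)| ≤ K (A ⟨x⟩⁻ᵃ + hᵐ B ⟨x⟩⁻ᵇ)`; the step `h = ⟨x⟩^((b-a)/m)` balances the two terms
and yields the exponent `(1 - k/m) a + (k/m) b`. The half-line estimate comes from Taylor
expansion at the nodes `0, 1, …, m-1` combined with a finite-difference formula that is exact on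
polynomials of degree `< m`. A multi-index is treated one coordinate at a time: interpolating
between the exponent reached for `|β|` and `r` reproduces the exponent for `|β| + k`.
-/

open Finset Matrix
open scoped Nat

theorem exists_sum_mul_pow_eq {K : Type*} [Field K] {m : ℕ} {v : Fin m → K}
    (hv : Function.Injective v) (y : Fin m → K) :
    ∃ c : Fin m → K, ∀ t : Fin m, ∑ j, c j * v j ^ (t : ℕ) = y t := by
  have hdet : IsUnit (vandermonde v).det := (det_vandermonde_ne_zero_iff.mpr hv).isUnit
  refine ⟨y ᵥ* (vandermonde v)⁻¹, fun t => ?_⟩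
  have hy : (y ᵥ* (vandermonde v)⁻¹) ᵥ* vandermonde v = y := by
    rw [vecMul_vecMul, nonsing_inv_mul _ hdet, vecMul_one]
  simpa [vecMul, dotProduct] using congrFun hy t

section HalfLine

variable {E : Type*} [NormedAddCommGroup E] [NormedSpace ℝ E]

theorem norm_sub_taylor_le_of_halfLine {g : ℝ → E} {p : ℕ} (hg : ContDiff ℝ (p + 1) g) {B : ℝ}
    (hB : ∀ t, 0 ≤ t → ‖iteratedDeriv (p + 1) g t‖ ≤ B) {x : ℝ} (hx : 0 ≤ x) :
    ‖g x - ∑ t ∈ range (p + 1), ((t ! : ℝ)⁻¹ * x ^ t) • iteratedDeriv t g 0‖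
      ≤ B * x ^ (p + 1) / p ! := by
  have hUD : UniqueDiffOn ℝ (Set.Icc 0 (x + 1)) := uniqueDiffOn_Icc (by linarith)
  have hwithin : ∀ t ≤ p + 1, ∀ y ∈ Set.Icc (0 : ℝ) (x + 1),
      iteratedDerivWithin t g (Set.Icc 0 (x + 1)) y = iteratedDeriv t g y := fun t ht y hy =>
    iteratedDerivWithin_eq_iteratedDeriv hUD (hg.of_le (by exact_mod_cast ht)).contDiffAt hy
  have h := taylor_mean_remainder_bound (by linarith) hg.contDiffOn ⟨hx, by linarith⟩
    fun y hy => (hwithin _ le_rfl y hy).symm ▸ hB y hy.1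
  rw [taylor_within_apply, sub_zero] at h
  rwa [sum_congr rfl fun t ht => by
    rw [hwithin t (by simp at ht; omega) 0 ⟨le_rfl, by linarith⟩]] at h

theorem sum_smul_taylorPoly_eq {m k : ℕ} (hk : k < m) {x c : Fin m → ℝ}
    (hc : ∀ t < m, ∑ j, c j * x j ^ t = if t = k then (k ! : ℝ) else 0) (a : ℕ → E) :
    ∑ j, c j • ∑ t ∈ range m, ((t ! : ℝ)⁻¹ * x j ^ t) • a t = a k := by
  simp_rw [smul_sum, smul_smul, sum_comm (s := univ), ← sum_smul, mul_left_comm (c _), ← mul_sum]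
  rw [sum_eq_single_of_mem k (mem_range.mpr hk)]
  · rw [hc k hk, if_pos rfl, inv_mul_cancel₀ (by positivity), one_smul]
  · intro t ht htk
    rw [hc t (mem_range.mp ht), if_neg htk, mul_zero, zero_smul]

theorem exists_norm_iteratedDeriv_le_of_halfLine {m k : ℕ} (hk : k ≤ m) :
    ∃ K : ℝ, ∀ (g : ℝ → E) (A B : ℝ), ContDiff ℝ m g → (∀ t, 0 ≤ t → ‖g t‖ ≤ A) →
      (∀ t, 0 ≤ t → ‖iteratedDeriv m g t‖ ≤ B) → ‖iteratedDeriv k g 0‖ ≤ K * (A + B) := by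
  rcases hk.eq_or_lt with rfl | hkm
  · exact ⟨1, fun g A B _ hA hB => by linarith [hB 0 le_rfl, (norm_nonneg _).trans (hA 0 le_rfl)]⟩
  obtain ⟨p, rfl⟩ : ∃ p, m = p + 1 := ⟨m - 1, by omega⟩
  -- `∑ j, c j • g j = g⁽ᵏ⁾ 0` for every polynomial `g` of degree `≤ p`
  obtain ⟨c, hc⟩ := exists_sum_mul_pow_eq (v := fun j : Fin (p + 1) => (j : ℝ))
    (fun i j h => Fin.ext (Nat.cast_injective h)) fun t => if (t : ℕ) = k then (k ! : ℝ) else 0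
  refine ⟨(∑ j, |c j|) * (p + 1 : ℝ) ^ (p + 1), fun g A B hg hA hB => ?_⟩
  set T : ℝ → E := fun x => ∑ t ∈ range (p + 1), ((t ! : ℝ)⁻¹ * x ^ t) • iteratedDeriv t g 0
  have hT : ∑ j, c j • T j = iteratedDeriv k g 0 :=
    sum_smul_taylorPoly_eq hkm (fun t ht => hc ⟨t, ht⟩) _
  have hR : ∀ j : Fin (p + 1), ‖g j - T j‖ ≤ B * (p + 1 : ℝ) ^ (p + 1) := fun j => by
    have hj : (j : ℝ) ≤ p + 1 := by exact_mod_cast j.isLt.le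
    have hB0 : 0 ≤ B := (norm_nonneg _).trans (hB 0 le_rfl)
    calc ‖g j - T j‖ ≤ B * (j : ℝ) ^ (p + 1) / p ! :=
          norm_sub_taylor_le_of_halfLine (by exact_mod_cast hg) hB j.val.cast_nonneg
      _ ≤ B * (j : ℝ) ^ (p + 1) := div_le_self (by positivity) (by exact_mod_cast p.factorial_pos)
      _ ≤ B * (p + 1 : ℝ) ^ (p + 1) := by gcongr
  have hA' : A ≤ A * (p + 1 : ℝ) ^ (p + 1) :=
    le_mul_of_one_le_right ((norm_nonneg _).trans (hA 0 le_rfl)) (one_le_pow₀ (by linarith))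
  calc ‖iteratedDeriv k g 0‖ = ‖∑ j, c j • g j - ∑ j, c j • (g j - T j)‖ := by
        rw [← sum_sub_distrib, ← hT]; simp_rw [smul_sub, sub_sub_cancel]
    _ ≤ ∑ j, |c j| * A + ∑ j, |c j| * (B * (p + 1 : ℝ) ^ (p + 1)) := by
        refine (norm_sub_le _ _).trans (add_le_add ?_ ?_) <;>
          refine (norm_sum_le _ _).trans (sum_le_sum fun j _ => ?_) <;>
          rw [norm_smul, Real.norm_eq_abs] <;> gcongr
        · exact hA j j.val.cast_nonneg
        · exact hR j
    _ ≤ (∑ j, |c j|) * (p + 1 : ℝ) ^ (p + 1) * (A + B) := by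
        rw [← sum_mul, ← sum_mul]; nlinarith [sum_nonneg fun j (_ : j ∈ univ) => abs_nonneg (c j)]

end HalfLine

noncomputable def interpolatedExponent (a b : ℝ) (m k : ℕ) : ℝ :=
  (1 - (k : ℝ) / m) * a + ((k : ℝ) / m) * b

@[simp]
theorem interpolatedExponent_zero (a b : ℝ) (m : ℕ) : interpolatedExponent a b m 0 = a := by
  simp [interpolatedExponent]

theorem interpolatedExponent_nonneg {a b : ℝ} {m k : ℕ} (ha : 0 ≤ a) (hb : 0 ≤ b) (hk : k ≤ m) :
    0 ≤ interpolatedExponent a b m k := by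
  have h1 : (k : ℝ) / m ≤ 1 := div_le_one_of_le₀ (by exact_mod_cast hk) (by positivity)
  have h2 : 0 ≤ (k : ℝ) / m := by positivity
  unfold interpolatedExponent
  nlinarith

theorem interpolatedExponent_interpolatedExponent (a b : ℝ) {n σ k : ℕ} (h : σ + k ≤ n) :
    interpolatedExponent (interpolatedExponent a b n σ) b (n - σ) k
      = interpolatedExponent a b n (σ + k) := by
  rcases Nat.eq_zero_or_pos (n - σ) with hm | hm
  · obtain rfl : k = 0 := by omega
    simp
  have hn : (n : ℝ) ≠ 0 := by exact_mod_cast (show n ≠ 0 by omega)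
  have hm' : ((n - σ : ℕ) : ℝ) ≠ 0 := by exact_mod_cast hm.ne'
  unfold interpolatedExponent
  rw [Nat.cast_sub (by omega)] at hm' ⊢
  field_simp
  push_cast
  ring

theorem interpolatedExponent_eq_add {a b : ℝ} {m : ℕ} (hm : m ≠ 0) (k : ℕ) :
    interpolatedExponent a b m k = a + k * ((b - a) / m) := by
  unfold interpolatedExponent
  field_simp
  ring

theorem jap_pos {d : ℕ} (x : EuclideanSpace ℝ (Fin d)) : 0 < jap x :=
  Real.sqrt_pos.mpr (by positivity)

theorem jap_le_jap_add {d : ℕ} {x v : EuclideanSpace ℝ (Fin d)} (h : 0 ≤ inner ℝ x v) :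
    jap x ≤ jap (x + v) :=
  Real.sqrt_le_sqrt (by nlinarith [norm_add_sq_real x v, sq_nonneg ‖v‖])

theorem le_div_rpow_of_rpow_mul_le {c w a z A : ℝ} (hc : 0 < c) (hcw : c ≤ w) (ha : 0 ≤ a)
    (hz : 0 ≤ z) (h : w ^ a * z ≤ A) : z ≤ A / c ^ a := by
  rw [le_div_iff₀ (Real.rpow_pos_of_pos hc a), mul_comm]
  exact (mul_le_mul_of_nonneg_right (Real.rpow_le_rpow hc.le hcw ha) hz).trans h

section PartialDerivatives

variable {d : ℕ} {f : EuclideanSpace ℝ (Fin d) → ℂ}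

theorem contDiff_pd {i : Fin d} {m : ℕ} (hf : ContDiff ℝ (m + 1) f) : ContDiff ℝ m (pd i f) :=
  (hf.fderiv_right le_rfl).clm_apply contDiff_const

theorem contDiff_pd_iterate (i : Fin d) {m q : ℕ} (hf : ContDiff ℝ m f) (hq : q ≤ m) :
    ContDiff ℝ (m - q : ℕ) ((pd i)^[q] f) := by
  induction q generalizing f m with
  | zero => simpa using hf
  | succ q ih =>
    rw [Function.iterate_succ_apply]
    obtain ⟨m, rfl⟩ : ∃ m', m = m' + 1 := ⟨m - 1, by omega⟩
    simpa using ih (contDiff_pd (by exact_mod_cast hf)) (by omega)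

theorem hasDerivAt_comp_add_smul_single {i : Fin d} (hf : Differentiable ℝ f)
    (x : EuclideanSpace ℝ (Fin d)) (ε t : ℝ) :
    HasDerivAt (fun t : ℝ => f (x + t • ε • EuclideanSpace.single i 1))
      (ε • pd i f (x + t • ε • EuclideanSpace.single i 1)) t := by
  have hline : HasDerivAt (fun t : ℝ => x + t • ε • EuclideanSpace.single i (1 : ℝ))
      (ε • EuclideanSpace.single i 1) t := by
    simpa using ((hasDerivAt_id t).smul_const (ε • EuclideanSpace.single i (1 : ℝ))).const_add x
  have h := (hf _).hasFDerivAt.comp_hasDerivAt t hline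
  rw [map_smul] at h
  exact h

theorem iteratedDeriv_comp_add_smul_single {i : Fin d} {m q : ℕ} (hf : ContDiff ℝ m f)
    (hq : q ≤ m) (x : EuclideanSpace ℝ (Fin d)) (ε t : ℝ) :
    iteratedDeriv q (fun t : ℝ => f (x + t • ε • EuclideanSpace.single i 1)) t
      = ε ^ q • (pd i)^[q] f (x + t • ε • EuclideanSpace.single i 1) := by
  induction q generalizing f m with
  | zero => simp
  | succ q ih =>
    obtain ⟨m, rfl⟩ : ∃ m', m = m' + 1 := ⟨m - 1, by omega⟩
    have hderiv : deriv (fun t : ℝ => f (x + t • ε • EuclideanSpace.single i 1))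
        = ε • fun t => pd i f (x + t • ε • EuclideanSpace.single i 1) := funext fun t =>
      (hasDerivAt_comp_add_smul_single (hf.differentiable (by simp)) x ε t).deriv
    rw [iteratedDeriv_succ', hderiv, iteratedDeriv_const_smul_field,
      ih (contDiff_pd (by exact_mod_cast hf)) (by omega), smul_smul, ← pow_succ',
      Function.iterate_succ_apply]

theorem exists_weighted_bound_pd_iterate (i : Fin d) {m k : ℕ} (hk : k ≤ m) (hf : ContDiff ℝ m f)
    {a b A B : ℝ} (ha : 0 ≤ a) (hb : 0 ≤ b)
    (hA : ∀ x, jap x ^ a * ‖f x‖ ≤ A) (hB : ∀ x, jap x ^ b * ‖(pd i)^[m] f x‖ ≤ B) :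
    ∃ C, ∀ x, jap x ^ interpolatedExponent a b m k * ‖(pd i)^[k] f x‖ ≤ C := by
  rcases Nat.eq_zero_or_pos m with rfl | hm
  · obtain rfl : k = 0 := by omega
    exact ⟨A, by simpa using hA⟩
  obtain ⟨K, hK⟩ := exists_norm_iteratedDeriv_le_of_halfLine (E := ℂ) hk
  refine ⟨K * (A + B), fun x => ?_⟩
  set J := jap x
  have hJ : 0 < J := jap_pos x
  set h := J ^ ((b - a) / m)
  have hh : 0 < h := Real.rpow_pos_of_pos hJ _
  have hJh : J ^ a * h ^ m = J ^ b := by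
    rw [← Real.rpow_natCast, ← Real.rpow_mul hJ.le, ← Real.rpow_add hJ]
    congr 1
    field_simp
    ring
  have hν : J ^ interpolatedExponent a b m k = J ^ a * h ^ k := by
    rw [interpolatedExponent_eq_add hm.ne', Real.rpow_add hJ, ← Real.rpow_natCast,
      ← Real.rpow_mul hJ.le, mul_comm (k : ℝ)]
  obtain ⟨ε, hε, hεx⟩ : ∃ ε : ℝ, |ε| = h ∧ 0 ≤ ε * x i := by
    rcases le_total 0 (x i) with hx | hx
    · exact ⟨h, abs_of_pos hh, by positivity⟩
    · exact ⟨-h, by simp [abs_of_pos hh], by nlinarith⟩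
  set y : ℝ → EuclideanSpace ℝ (Fin d) := fun t => x + t • ε • EuclideanSpace.single i 1
  have hy : ∀ t, 0 ≤ t → J ≤ jap (y t) := fun t ht => by
    refine jap_le_jap_add ?_
    rw [real_inner_smul_right, real_inner_smul_right, EuclideanSpace.inner_single_right]
    simpa using mul_nonneg ht hεx
  have hderiv : ∀ q ≤ m, ∀ t,
      ‖iteratedDeriv q (fun t => f (y t)) t‖ = h ^ q * ‖(pd i)^[q] f (y t)‖ := fun q hq t => by
    rw [iteratedDeriv_comp_add_smul_single hf hq, norm_smul, norm_pow, Real.norm_eq_abs, hε]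
  have h1D := hK (fun t => f (y t)) (A / J ^ a) (h ^ m * (B / J ^ b))
    (hf.comp (contDiff_const.add (contDiff_id.smul contDiff_const)))
    (fun t ht => le_div_rpow_of_rpow_mul_le hJ (hy t ht) ha (norm_nonneg _) (hA _))
    (fun t ht => by
      rw [hderiv m le_rfl]
      gcongr
      exact le_div_rpow_of_rpow_mul_le hJ (hy t ht) hb (norm_nonneg _) (hB _))
  rw [hderiv k hk, show y 0 = x by simp [y]] at h1D
  calc J ^ interpolatedExponent a b m k * ‖(pd i)^[k] f x‖
      = J ^ a * (h ^ k * ‖(pd i)^[k] f x‖) := by rw [hν]; ring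
    _ ≤ J ^ a * (K * (A / J ^ a + h ^ m * (B / J ^ b))) := by gcongr
    _ = K * (A * (J ^ a / J ^ a) + B * (J ^ a * h ^ m / J ^ b)) := by ring
    _ = K * (A + B) := by
        rw [hJh, div_self (Real.rpow_pos_of_pos hJ _).ne', div_self (Real.rpow_pos_of_pos hJ _).ne']
        ring

end PartialDerivatives

section MultiIndex

variable {d : ℕ}

noncomputable def mderivOn (L : List (Fin d)) (α : Fin d → ℕ)
    (f : EuclideanSpace ℝ (Fin d) → ℂ) : EuclideanSpace ℝ (Fin d) → ℂ :=
  L.foldr (fun i g => (pd i)^[α i] g) f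

theorem mderivOn_cons (i : Fin d) (L : List (Fin d)) (α : Fin d → ℕ)
    (f : EuclideanSpace ℝ (Fin d) → ℂ) :
    mderivOn (i :: L) α f = (pd i)^[α i] (mderivOn L α f) := rfl

theorem mderivOn_congr {L : List (Fin d)} {α β : Fin d → ℕ} (h : ∀ i ∈ L, α i = β i)
    (f : EuclideanSpace ℝ (Fin d) → ℂ) : mderivOn L α f = mderivOn L β f := by
  induction L with
  | nil => rfl
  | cons j L ih =>
    rw [mderivOn_cons, mderivOn_cons, h j (by simp), ih fun i hi => h i (by simp [hi])]

theorem mderivOn_eq_self {L : List (Fin d)} {α : Fin d → ℕ} (h : ∀ i ∈ L, α i = 0)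
    (f : EuclideanSpace ℝ (Fin d) → ℂ) : mderivOn L α f = f := by
  rw [mderivOn_congr h]
  induction L with
  | nil => rfl
  | cons j L ih => simpa [mderivOn_cons] using ih fun i hi => h i (by simp [hi])

theorem contDiff_mderivOn {f : EuclideanSpace ℝ (Fin d) → ℂ} {n : ℕ} (hf : ContDiff ℝ n f)
    {L : List (Fin d)} {α : Fin d → ℕ} (h : (L.map α).sum ≤ n) :
    ContDiff ℝ (n - (L.map α).sum : ℕ) (mderivOn L α f) := by
  induction L with
  | nil => simpa [mderivOn] using hf
  | cons i L ih =>
    simp only [List.map_cons, List.sum_cons] at h ⊢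
    have := contDiff_pd_iterate i (ih (by omega)) (q := α i) (by omega)
    rwa [Nat.sub_sub, add_comm] at this

theorem exists_mderiv_eq_pd_iterate_mderivOn {i : Fin d} {L : List (Fin d)}
    (hL : i :: L <:+ List.finRange d) (α : Fin d → ℕ) (k : ℕ)
    (f : EuclideanSpace ℝ (Fin d) → ℂ) :
    ∃ γ : Fin d → ℕ, ∑ j, γ j = k + (L.map α).sum ∧
      mderiv γ f = (pd i)^[k] (mderivOn L α f) := by
  classical
  obtain ⟨P, hP⟩ := hL
  have hnd := hP ▸ List.nodup_finRange d
  simp only [List.nodup_append, List.nodup_cons] at hnd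
  let γ : Fin d → ℕ := fun j => if j ∈ L then α j else if j = i then k else 0
  have hγP : ∀ j ∈ P, γ j = 0 := fun j hj => by
    have hjL : j ∉ L := fun h => hnd.2.2 j hj j (by simp [h]) rfl
    simp [γ, hjL, hnd.2.2 j hj i (by simp)]
  have hγi : γ i = k := by simp [γ, hnd.2.1.1]
  have hγL : ∀ j ∈ L, γ j = α j := fun j hj => by simp [γ, hj]
  refine ⟨γ, ?_, ?_⟩
  · rw [Fin.sum_univ_def, ← hP, List.map_append, List.sum_append, List.map_cons, List.sum_cons,
      List.sum_eq_zero (by simpa using hγP), hγi, List.map_congr_left hγL, zero_add]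
  · change mderivOn _ γ f = _
    rw [← hP, mderivOn, List.foldr_append, ← mderivOn, ← mderivOn, mderivOn_eq_self hγP,
      mderivOn_cons, hγi, mderivOn_congr hγL]

end MultiIndex

theorem exists_weighted_bound_mderivOn {d n : ℕ} {u : EuclideanSpace ℝ (Fin d) → ℂ}
    (hu : ContDiff ℝ n u) {s r : ℝ} (hs : 0 ≤ s) (hr : 0 ≤ r) {Cu Cn : ℝ}
    (h0 : ∀ x, jap x ^ s * ‖u x‖ ≤ Cu)
    (hn : ∀ α : Fin d → ℕ, (∑ i, α i) = n → ∀ x, jap x ^ r * ‖mderiv α u x‖ ≤ Cn)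
    {L : List (Fin d)} (hL : L <:+ List.finRange d) (α : Fin d → ℕ) (hα : (L.map α).sum ≤ n) :
    ∃ C, ∀ x, jap x ^ interpolatedExponent s r n (L.map α).sum * ‖mderivOn L α u x‖ ≤ C := by
  induction L with
  | nil => exact ⟨Cu, by simpa [mderivOn] using h0⟩
  | cons i L ih =>
    simp only [List.map_cons, List.sum_cons] at hα ⊢
    obtain ⟨C, hC⟩ := ih ((List.suffix_cons i L).trans hL) (by omega)
    obtain ⟨γ, hγ, hγu⟩ := exists_mderiv_eq_pd_iterate_mderivOn hL α (n - (L.map α).sum) u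
    have hB : ∀ x, jap x ^ r * ‖(pd i)^[n - (L.map α).sum] (mderivOn L α u) x‖ ≤ Cn :=
      hγu ▸ hn γ (by omega)
    have h := exists_weighted_bound_pd_iterate i (k := α i) (by omega)
      (contDiff_mderivOn hu (by omega)) (interpolatedExponent_nonneg hs hr (by omega)) hr hC hB
    rwa [interpolatedExponent_interpolatedExponent _ _ (by omega), add_comm] at h

/-- Weighted interpolation: if `⟨x⟩^s u` and `⟨x⟩^r ∂^α u` (`|α| = n`) are bounded, then
`⟨x⟩^ν ∂^α u` is bounded for `|α| = ℓ`, with `ν = (1-ℓ/n)s + (ℓ/n)r`. -/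
theorem weighted_interpolation_derivatives (d ℓ n : ℕ) (hln : ℓ ≤ n)
    (u : EuclideanSpace ℝ (Fin d) → ℂ) (hu : ContDiff ℝ n u)
    (s r : ℝ) (hs : 0 ≤ s) (hr : 0 ≤ r) (Cu Cn : ℝ)
    (h0 : ∀ x, jap x ^ s * ‖u x‖ ≤ Cu)
    (hn : ∀ α : Fin d → ℕ, (∑ i, α i) = n → ∀ x, jap x ^ r * ‖mderiv α u x‖ ≤ Cn) :
    ∀ α : Fin d → ℕ, (∑ i, α i) = ℓ →
      ∃ C : ℝ, ∀ x, jap x ^ ((1 - (ℓ : ℝ) / n) * s + ((ℓ : ℝ) / n) * r) * ‖mderiv α u x‖ ≤ C := by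
  intro α hα
  rw [Fin.sum_univ_def] at hα
  have h := exists_weighted_bound_mderivOn hu hs hr h0 hn (List.suffix_refl _) α (hα ▸ hln)
  rwa [hα] at h
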